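/- Let V, D : H → ℓ²(ℕ) be isometries, {Γ_k}_{k=1}^r and {Λ_l}_{l=1}^r families of index sets, and suppose ‖P_{Γ_k} V D* P_{Λ_l}‖ ≤ ω(k,l) with Σ_{l=1}^r ω(k,l) ≤ C for each k. Define Θ = {g ∈ H : g = D*η for some η, and ‖P_{Λ_l} D g‖_{ℓ²}² ≤ κ_l for l = 1,…,r} and \hatκ_k = max_{g∈Θ} ‖P_{Γ_k} V g‖². If additionally the Λ_l partition ℕ, then \hatκ_k ≤ C Σ_{l=1}^r ω(k,l) κ_l for each k = 1,…,r. -/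

import Mathlib

/-!
Since `D` is an isometry, `D* D = 1`, and since the `Λ_l` partition `ℕ` the coordinate projections
`P_{Λ_l}` sum to the identity. Hence `P_{Γ_k} V g = ∑_l (P_{Γ_k} V D* P_{Λ_l}) (P_{Λ_l} D g)`, and
the triangle inequality followed by Cauchy–Schwarz with weights `ω(k,l)` gives the bound.
-/

open scoped Classical
noncomputable abbrev ℓ2 := lp (fun _ : ℕ => ℂ) 2

open Finset

section CauchySchwarz

variable {ι 𝕜 E F : Type*} [NontriviallyNormedField 𝕜]
  [SeminormedAddCommGroup E] [NormedSpace 𝕜 E] [SeminormedAddCommGroup F] [NormedSpace 𝕜 F]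

theorem norm_sum_apply_sq_le (s : Finset ι) (T : ι → E →L[𝕜] F) (x : ι → E) {ω κ : ι → ℝ}
    {C : ℝ} (hT : ∀ i ∈ s, ‖T i‖ ≤ ω i) (hx : ∀ i ∈ s, ‖x i‖ ^ 2 ≤ κ i)
    (hC : ∑ i ∈ s, ω i ≤ C) :
    ‖∑ i ∈ s, T i (x i)‖ ^ 2 ≤ C * ∑ i ∈ s, ω i * κ i := by
  have hω : ∀ i ∈ s, 0 ≤ ω i := fun i hi => (norm_nonneg _).trans (hT i hi)
  have hκ : ∀ i ∈ s, 0 ≤ κ i := fun i hi => (sq_nonneg _).trans (hx i hi)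
  have hωκ : ∀ i ∈ s, 0 ≤ ω i * κ i := fun i hi => mul_nonneg (hω i hi) (hκ i hi)
  have hterm : ∀ i ∈ s, ‖T i (x i)‖ ^ 2 ≤ ω i * (ω i * κ i) := fun i hi =>
    calc ‖T i (x i)‖ ^ 2 ≤ (‖T i‖ * ‖x i‖) ^ 2 := by gcongr; exact (T i).le_opNorm (x i)
      _ = ‖T i‖ ^ 2 * ‖x i‖ ^ 2 := mul_pow _ _ _
      _ ≤ ω i ^ 2 * κ i := by gcongr; exacts [hT i hi, hx i hi]
      _ = ω i * (ω i * κ i) := by ring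
  calc ‖∑ i ∈ s, T i (x i)‖ ^ 2 ≤ (∑ i ∈ s, ‖T i (x i)‖) ^ 2 := by
        gcongr; exact norm_sum_le _ _
    _ ≤ (∑ i ∈ s, ω i) * ∑ i ∈ s, ω i * κ i := sum_sq_le_sum_mul_sum_of_sq_le_mul s hω hωκ hterm
    _ ≤ C * ∑ i ∈ s, ω i * κ i := by gcongr; exact sum_nonneg hωκ

end CauchySchwarz

namespace lp

variable {α ι : Type*} {E : α → Type*} [∀ a, NormedAddCommGroup (E a)] {p : ENNReal}

theorem restrict_restrict {S : Set α} (P : lp E p → lp E p)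
    (hP : ∀ z j, P z j = if j ∈ S then z j else 0) (z : lp E p) : P (P z) = P z := by
  ext j
  rw [hP, hP]
  split_ifs <;> rfl

theorem sum_restrict_eq_self [Fintype ι] {Λ : ι → Set α}
    (hdisj : Pairwise (Function.onFun Disjoint Λ)) (hcover : ⋃ l, Λ l = Set.univ) (P : ι → lp E p → lp E p)
    (hP : ∀ l z j, P l z j = if j ∈ Λ l then z j else 0) (z : lp E p) : ∑ l, P l z = z := by
  ext j
  obtain ⟨l₀, hl₀⟩ := Set.mem_iUnion.1 (hcover ▸ Set.mem_univ j)
  rw [coeFn_sum, Finset.sum_apply, sum_eq_single l₀]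
  · rw [hP, if_pos hl₀]
  · intro l _ hl
    rw [hP, if_neg fun hj => (hdisj hl).le_bot ⟨hj, hl₀⟩]
  · exact fun h => (h (mem_univ l₀)).elim

end lp

theorem stmt_16_general {H : Type*} [NormedAddCommGroup H] [InnerProductSpace ℂ H] [CompleteSpace H]
    (V D : H →L[ℂ] ℓ2) (hD : ∀ f : H, ‖D f‖ = ‖f‖)
    (r : ℕ) (Λ : Fin r → Set ℕ)
    (hΛdisj : ∀ l l', l ≠ l' → Disjoint (Λ l) (Λ l'))
    (hΛcover : (⋃ l, Λ l) = Set.univ)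
    (PΓ PΛ : Fin r → (ℓ2 →L[ℂ] ℓ2))
    (hPΛ : ∀ l (z : ℓ2) (j : ℕ), (PΛ l z) j = if j ∈ Λ l then z j else 0)
    (ω : Fin r → Fin r → ℝ)
    (κ : Fin r → ℝ)
    (C : ℝ)
    (hωC : ∀ k, ∑ l, ω k l ≤ C)
    (hloc : ∀ k l, ‖(PΓ k).comp ((V.comp (ContinuousLinearMap.adjoint D)).comp (PΛ l))‖ ≤ ω k l)
    (g : H)
    (hgκ : ∀ l, ‖PΛ l (D g)‖ ^ 2 ≤ κ l)
    (k : Fin r) :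
    ‖PΓ k (V g)‖ ^ 2 ≤ C * ∑ l, ω k l * κ l := by
  have hDD (f : H) : ContinuousLinearMap.adjoint D (D f) = f :=
    DFunLike.congr_fun (D.norm_map_iff_adjoint_comp_self.1 hD) f
  have hdecomp : PΓ k (V g) =
      ∑ l, (PΓ k).comp ((V.comp (ContinuousLinearMap.adjoint D)).comp (PΛ l)) (PΛ l (D g)) := by
    conv_lhs => rw [← hDD g, ← lp.sum_restrict_eq_self hΛdisj hΛcover (fun l => PΛ l) hPΛ (D g)]
    simp only [map_sum, ContinuousLinearMap.comp_apply, lp.restrict_restrict (PΛ _) (hPΛ _)]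
  rw [hdecomp]
  exact norm_sum_apply_sq_le _ _ _ (fun l _ => hloc k l) (fun l _ => hgκ l) (hωC k)

/-- Relative sparsity bound (Lemma on relative sparsity): if
`‖P_{Γ_k} V D* P_{Λ_l}‖ ≤ ω(k,l)` with `Σ_l ω(k,l) ≤ C`, and the `Λ_l` partition `ℕ`,
then every `g = D*η` with `‖P_{Λ_l} D g‖² ≤ κ_l` for all `l` satisfies
`‖P_{Γ_k} V g‖² ≤ C Σ_l ω(k,l) κ_l`. -/
theorem stmt_16 {H : Type*} [NormedAddCommGroup H] [InnerProductSpace ℂ H] [CompleteSpace H]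
    (V D : H →L[ℂ] ℓ2) (hV : ∀ f : H, ‖V f‖ = ‖f‖) (hD : ∀ f : H, ‖D f‖ = ‖f‖)
    (r : ℕ) (Γ Λ : Fin r → Set ℕ)
    (hΛdisj : ∀ l l', l ≠ l' → Disjoint (Λ l) (Λ l'))
    (hΛcover : (⋃ l, Λ l) = Set.univ)
    (PΓ PΛ : Fin r → (ℓ2 →L[ℂ] ℓ2))
    (hPΓ : ∀ k (z : ℓ2) (j : ℕ), (PΓ k z) j = if j ∈ Γ k then z j else 0)
    (hPΛ : ∀ l (z : ℓ2) (j : ℕ), (PΛ l z) j = if j ∈ Λ l then z j else 0)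
    (ω : Fin r → Fin r → ℝ) (hω0 : ∀ k l, 0 ≤ ω k l)
    (κ : Fin r → ℝ) (hκ0 : ∀ l, 0 ≤ κ l)
    (C : ℝ)
    (hωC : ∀ k, ∑ l, ω k l ≤ C)
    (hloc : ∀ k l, ‖(PΓ k).comp ((V.comp (ContinuousLinearMap.adjoint D)).comp (PΛ l))‖ ≤ ω k l)
    (g : H) (η : ℓ2) (hg : g = ContinuousLinearMap.adjoint D η)
    (hgκ : ∀ l, ‖PΛ l (D g)‖ ^ 2 ≤ κ l)
    (k : Fin r) :
    ‖PΓ k (V g)‖ ^ 2 ≤ C * ∑ l, ω k l * κ l :=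
  stmt_16_general V D hD r Λ hΛdisj hΛcover PΓ PΛ hPΛ ω κ C hωC hloc g hgκ k
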